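/- Let G be a graph whose vertices are partitioned into k ≥ 2 independent sets (i.e., G is k-colorable), let W be a real symmetric matrix supported on the edges of G, W ≠ 0, with largest eigenvalue λ_1 and least eigenvalue λ_n. Then k ≥ 1 − λ_1/λ_n. -/

import Mathlib

/-!
Let `v` be a unit eigenvector of `W` for `λ₁` and `x_c` its restriction to the colour class `c`.
Since `W` vanishes on each class, `x_cᵀ W x_c = 0`, so the Rayleigh bound `λₙ ‖y‖² ≤ yᵀ W y` for the
`k` test vectors `y_c = v - k x_c`, summed over `c`, gives `k (k - 1) λₙ ≤ -k λ₁`.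
As `W ≠ 0` has zero trace, `λₙ < 0`, and dividing by `λₙ` yields the bound.
-/

open Matrix Finset
open scoped MatrixOrder

namespace Matrix

variable {ι κ R : Type*} [Fintype ι] [NonUnitalNonAssocSemiring R]

theorem indicator_dotProduct_eq_indicator_dotProduct_indicator (s : Set ι) (v w : ι → R) :
    s.indicator v ⬝ᵥ w = s.indicator v ⬝ᵥ s.indicator w := by
  refine Finset.sum_congr rfl fun i _ => ?_
  by_cases hi : i ∈ s <;> simp [hi]

theorem sum_indicator_fiber_dotProduct [Fintype κ] (φ : ι → κ) (v w : ι → R) :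
    ∑ c, (φ ⁻¹' {c}).indicator v ⬝ᵥ (φ ⁻¹' {c}).indicator w = v ⬝ᵥ w := by
  classical
  simp only [dotProduct, Set.indicator_apply, Set.mem_preimage, Set.mem_singleton_iff]
  rw [Finset.sum_comm]
  refine Finset.sum_congr rfl fun i _ => ?_
  simp [ite_mul]

theorem indicator_dotProduct_mulVec_indicator_eq_zero (A : Matrix ι ι R) {s : Set ι}
    (hs : ∀ i ∈ s, ∀ j ∈ s, A i j = 0) (v w : ι → R) :
    s.indicator v ⬝ᵥ A *ᵥ s.indicator w = 0 := by
  refine Finset.sum_eq_zero fun i _ => ?_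
  by_cases hi : i ∈ s
  · refine mul_eq_zero_of_right _ (Finset.sum_eq_zero fun j _ => ?_)
    by_cases hj : j ∈ s
    · simp [hs i hi j hj]
    · simp [hj]
  · simp [hi]

end Matrix

namespace Matrix.IsHermitian

variable {ι : Type*} [Fintype ι] {A : Matrix ι ι ℝ}

theorem dotProduct_mulVec_eq_of_mulVec_eq_smul (hA : A.IsHermitian) {v : ι → ℝ} {μ : ℝ}
    (hv : A *ᵥ v = μ • v) (w : ι → ℝ) : v ⬝ᵥ A *ᵥ w = μ * (v ⬝ᵥ w) := by
  rw [dotProduct_mulVec, ← mulVec_transpose, ← conjTranspose_eq_transpose_of_trivial, hA.eq, hv,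
    smul_dotProduct, smul_eq_mul]

variable [DecidableEq ι]

theorem iInf_eigenvalues_mul_dotProduct_self_le (hA : A.IsHermitian) (x : ι → ℝ) :
    (⨅ i, hA.eigenvalues i) * (x ⬝ᵥ x) ≤ x ⬝ᵥ A *ᵥ x := by
  have hle : algebraMap ℝ _ (⨅ i, hA.eigenvalues i) ≤ A := by
    rw [algebraMap_le_iff_le_spectrum hA.isSelfAdjoint, hA.spectrum_real_eq_range_eigenvalues]
    rintro _ ⟨i, rfl⟩
    exact ciInf_le (Finite.bddBelow_range _) i
  have := (le_iff.mp hle).dotProduct_mulVec_nonneg x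
  simpa [sub_mulVec, Algebra.algebraMap_eq_smul_one, smul_mulVec, dotProduct_sub] using this

theorem iInf_eigenvalues_neg_of_trace_eq_zero (hA : A.IsHermitian) (hA0 : A ≠ 0)
    (htr : A.trace = 0) : (⨅ i, hA.eigenvalues i) < 0 := by
  by_contra! h
  have hnonneg (i : ι) : 0 ≤ hA.eigenvalues i := h.trans (ciInf_le (Finite.bddBelow_range _) i)
  have hsum : ∑ i, hA.eigenvalues i = 0 := by simpa [hA.trace_eq_sum_eigenvalues] using htr
  refine hA0 (hA.eigenvalues_eq_zero_iff.mp (funext fun i => ?_))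
  exact (sum_eq_zero_iff_of_nonneg fun i _ => hnonneg i).mp hsum i (mem_univ i)

theorem iInf_eigenvalues_mul_le_of_dotProduct_mulVec_self_eq_zero (hA : A.IsHermitian)
    {v x : ι → ℝ} {μ : ℝ} (hv : A *ᵥ v = μ • v) (hvv : v ⬝ᵥ v = 1) (hxv : x ⬝ᵥ v = x ⬝ᵥ x)
    (hx : x ⬝ᵥ A *ᵥ x = 0) (r : ℝ) :
    (⨅ i, hA.eigenvalues i) * (1 - 2 * r * (x ⬝ᵥ x) + r ^ 2 * (x ⬝ᵥ x)) ≤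
      μ * (1 - 2 * r * (x ⬝ᵥ x)) := by
  have hvx : v ⬝ᵥ x = x ⬝ᵥ x := dotProduct_comm v x ▸ hxv
  have hxAv : x ⬝ᵥ A *ᵥ v = μ * (x ⬝ᵥ x) := by rw [hv, dotProduct_smul, smul_eq_mul, hxv]
  have hvAx : v ⬝ᵥ A *ᵥ x = μ * (x ⬝ᵥ x) := by
    rw [hA.dotProduct_mulVec_eq_of_mulVec_eq_smul hv, hvx]
  have hvAv : v ⬝ᵥ A *ᵥ v = μ := by rw [hv, dotProduct_smul, smul_eq_mul, hvv, mul_one]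
  have hnorm : (v - r • x) ⬝ᵥ (v - r • x) = 1 - 2 * r * (x ⬝ᵥ x) + r ^ 2 * (x ⬝ᵥ x) := by
    simp only [sub_dotProduct, dotProduct_sub, smul_dotProduct, dotProduct_smul, smul_eq_mul,
      hvv, hvx, hxv]
    ring
  have hform : (v - r • x) ⬝ᵥ A *ᵥ (v - r • x) = μ * (1 - 2 * r * (x ⬝ᵥ x)) := by
    simp only [mulVec_sub, mulVec_smul, sub_dotProduct, dotProduct_sub, smul_dotProduct,
      dotProduct_smul, smul_eq_mul, hvAv, hvAx, hxAv, hx]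
    ring
  simpa only [hnorm, hform] using hA.iInf_eigenvalues_mul_dotProduct_self_le (v - r • x)

theorem exists_mulVec_eq_iSup_eigenvalues_smul [Nonempty ι] (hA : A.IsHermitian) :
    ∃ v : ι → ℝ, v ⬝ᵥ v = 1 ∧ A *ᵥ v = (⨆ i, hA.eigenvalues i) • v := by
  obtain ⟨i, hi⟩ := exists_eq_ciSup_of_finite (f := hA.eigenvalues)
  refine ⟨hA.eigenvectorBasis i, ?_, hi ▸ hA.mulVec_eigenvectorBasis i⟩
  have h := inner_self_eq_one_of_norm_eq_one (𝕜 := ℝ) (hA.eigenvectorBasis.orthonormal.1 i)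
  rwa [EuclideanSpace.inner_eq_star_dotProduct, star_trivial] at h

theorem card_sub_one_mul_iInf_eigenvalues_le [Nonempty ι] {κ : Type*} [Fintype κ]
    (hA : A.IsHermitian) (φ : ι → κ) (hblock : ∀ i j, φ i = φ j → A i j = 0) :
    ((Fintype.card κ : ℝ) - 1) * (⨅ i, hA.eigenvalues i) ≤ -⨆ i, hA.eigenvalues i := by
  obtain ⟨v, hvv, hv⟩ := hA.exists_mulVec_eq_iSup_eigenvalues_smul
  set k : ℝ := (Fintype.card κ : ℝ)
  have hclass (c : κ) := hA.iInf_eigenvalues_mul_le_of_dotProduct_mulVec_self_eq_zero hv hvv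
    (indicator_dotProduct_eq_indicator_dotProduct_indicator _ v v)
    (A.indicator_dotProduct_mulVec_indicator_eq_zero (s := φ ⁻¹' {c})
      (fun i hi j hj => hblock i j (hi.trans hj.symm)) v v) k
  have ht : ∑ c, (φ ⁻¹' {c}).indicator v ⬝ᵥ (φ ⁻¹' {c}).indicator v = 1 :=
    (sum_indicator_fiber_dotProduct φ v v).trans hvv
  have hsum := Finset.sum_le_sum fun c (_ : c ∈ univ) => hclass c
  simp only [← Finset.mul_sum, sum_add_distrib, sum_sub_distrib, sum_const, ht, card_univ,
    nsmul_eq_mul, mul_one] at hsum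
  have hk : 0 < k := by
    have : Nonempty κ := ⟨φ (Classical.arbitrary ι)⟩
    exact Nat.cast_pos.mpr Fintype.card_pos
  have hfactor : k * ((k - 1) * (⨅ i, hA.eigenvalues i) + ⨆ i, hA.eigenvalues i) ≤ 0 := by
    linarith
  linarith [nonpos_of_mul_nonpos_right hfactor hk]

end Matrix.IsHermitian

open Finset in
theorem weighted_hoffman_bound_general (n k : ℕ)
    (G : SimpleGraph (Fin n)) (φ : Fin n → Fin k)
    (hindep : ∀ i j, G.Adj i j → φ i ≠ φ j)
    (W : Matrix (Fin n) (Fin n) ℝ) (hW0 : W ≠ 0) (hW : W.IsHermitian)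
    (hsupp : ∀ i j, ¬ G.Adj i j → W i j = 0) :
    (k : ℝ) ≥ 1 - (⨆ i, hW.eigenvalues i) / (⨅ i, hW.eigenvalues i) := by
  obtain ⟨i, -, -⟩ : ∃ i j, W i j ≠ 0 := by simpa [← Matrix.ext_iff] using hW0
  have : Nonempty (Fin n) := ⟨i⟩
  have hblock (i j : Fin n) (h : φ i = φ j) : W i j = 0 := hsupp i j fun hij => hindep i j hij h
  have hneg := hW.iInf_eigenvalues_neg_of_trace_eq_zero hW0 (sum_eq_zero fun i _ => hblock i i rfl)
  have hkey := hW.card_sub_one_mul_iInf_eigenvalues_le φ hblock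
  rw [Fintype.card_fin] at hkey
  rw [ge_iff_le, sub_le_comm, le_div_iff_of_neg hneg]
  linarith

open Finset in
theorem weighted_hoffman_bound (n k : ℕ) (hk : 2 ≤ k)
    (G : SimpleGraph (Fin n)) (φ : Fin n → Fin k)
    (hindep : ∀ i j, G.Adj i j → φ i ≠ φ j)
    (W : Matrix (Fin n) (Fin n) ℝ) (hW0 : W ≠ 0) (hW : W.IsHermitian)
    (hsupp : ∀ i j, ¬ G.Adj i j → W i j = 0) :
    (k : ℝ) ≥ 1 - (⨆ i, hW.eigenvalues i) / (⨅ i, hW.eigenvalues i) :=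
  weighted_hoffman_bound_general n k G φ hindep W hW0 hW hsupp
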